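/- arXiv:2411.00688 — 2 statements merged into one kernel-verified Lean document; each statement's English description precedes it below -/
import Mathlib

section
/- Let f : ℝ^n → ℝ be convex and L-smooth (∇f is L-Lipschitz). Then gradient descent x_{k+1} = x_k − γ∇f(x_k) with step γ = 1/L satisfies f(x_k) − f(x*) ≤ L‖x₀ − x*‖²/(2k) for every minimizer x* of f and all k ≥ 1. -/
open RealInnerProductSpace

section gdAux
variable {E : Type*} [NormedAddCommGroup E] [InnerProductSpace ℝ E] [CompleteSpace E]

private lemma gd_line_hasDerivAt {f : E → ℝ} {f' : E → E}
    (hdiff : ∀ x, HasGradientAt f (f' x) x) (x v : E) (t : ℝ) :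
    HasDerivAt (fun t : ℝ => f (x + t • v)) ⟪f' (x + t • v), v⟫ t := by
  have hc : HasDerivAt (fun t : ℝ => x + t • v) v t := by
    simpa using ((hasDerivAt_id t).smul_const v).const_add x
  have := (hdiff (x + t • v)).hasFDerivAt.comp_hasDerivAt t hc
  simpa [InnerProductSpace.toDual_apply_apply, Function.comp_def] using this

private lemma gd_convex_lower {f : E → ℝ} {f' : E → E} (hconv : ConvexOn ℝ Set.univ f)
    (hdiff : ∀ x, HasGradientAt f (f' x) x) (x y : E) :
    f x + ⟪f' x, y - x⟫ ≤ f y := by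
  set v := y - x with hv
  set g : ℝ → ℝ := fun t => f (x + t • v) with hg
  have g_conv : ConvexOn ℝ Set.univ g := by
    have := hconv.comp_affineMap (AffineMap.lineMap x y)
    have he : g = f ∘ (AffineMap.lineMap x y) := by
      funext t
      simp only [hg, Function.comp_apply, AffineMap.lineMap_apply_module, hv]
      congr 1
      module
    rw [he]
    simpa using this
  have hd := gd_line_hasDerivAt hdiff x v 0
  have := g_conv.le_slope_of_hasDerivAt (Set.mem_univ (0:ℝ)) (Set.mem_univ (1:ℝ)) one_pos
    (by simpa using hd)
  have hs : slope g 0 1 = f y - f x := by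
    simp [slope_def_field, hg, hv]
  rw [hs] at this
  simpa using by linarith [this]

private lemma gd_descent {f : E → ℝ} {f' : E → E} {L : ℝ} (hL : 0 < L)
    (hdiff : ∀ x, HasGradientAt f (f' x) x)
    (hlip : LipschitzWith (Real.toNNReal L) f') (x y : E) :
    f y ≤ f x + ⟪f' x, y - x⟫ + L / 2 * ‖y - x‖ ^ 2 := by
  set v := y - x with hv
  set g : ℝ → ℝ := fun t => f (x + t • v) with hgdef
  have hg : ∀ t, HasDerivAt g ⟪f' (x + t • v), v⟫ t := gd_line_hasDerivAt hdiff x v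
  set h : ℝ → ℝ := fun t => L * ‖v‖ ^ 2 * t ^ 2 / 2 - g t + t * ⟪f' x, v⟫ with hhdef
  have hh : ∀ t, HasDerivAt h (L * ‖v‖ ^ 2 * t - ⟪f' (x + t • v), v⟫ + ⟪f' x, v⟫) t := by
    intro t
    have h1 : HasDerivAt (fun t : ℝ => L * ‖v‖ ^ 2 * t ^ 2 / 2) (L * ‖v‖ ^ 2 * t) t := by
      have : HasDerivAt (fun y : ℝ => L * ‖v‖ ^ 2 / 2 * y ^ 2) (L * ‖v‖ ^ 2 / 2 * (((2:ℕ):ℝ) * t ^ (2 - 1))) t :=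
        (hasDerivAt_pow 2 t).const_mul (L * ‖v‖ ^ 2 / 2)
      convert this using 1
      · funext s; ring
      · simp; ring
    have h2 : HasDerivAt (fun t : ℝ => t * ⟪f' x, v⟫) ⟪f' x, v⟫ t := by
      simpa using (hasDerivAt_id t).mul_const ⟪f' x, v⟫
    exact (h1.sub (hg t)).add h2
  have key : ∀ t ∈ Set.Icc (0:ℝ) 1, 0 ≤ L * ‖v‖ ^ 2 * t - ⟪f' (x + t • v), v⟫ + ⟪f' x, v⟫ := by
    intro t ht
    have hb : ⟪f' (x + t • v) - f' x, v⟫ ≤ L * t * ‖v‖ ^ 2 := by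
      calc ⟪f' (x + t • v) - f' x, v⟫ ≤ ‖f' (x + t • v) - f' x‖ * ‖v‖ :=
            real_inner_le_norm _ _
        _ ≤ (L * (t * ‖v‖)) * ‖v‖ := by
            apply mul_le_mul_of_nonneg_right _ (norm_nonneg v)
            have := hlip.dist_le_mul (x + t • v) x
            rw [Real.coe_toNNReal L hL.le] at this
            simpa [dist_eq_norm, norm_smul, abs_of_nonneg ht.1] using this
        _ = L * t * ‖v‖ ^ 2 := by ring
    rw [inner_sub_left] at hb
    nlinarith
  have mono : MonotoneOn h (Set.Icc (0:ℝ) 1) := by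
    apply monotoneOn_of_deriv_nonneg (convex_Icc 0 1)
    · have : Differentiable ℝ h := fun t => ((hh t).differentiableAt)
      exact this.continuous.continuousOn
    · exact fun t _ => ((hh t).differentiableAt).differentiableWithinAt
    · intro t ht
      rw [interior_Icc] at ht
      rw [(hh t).deriv]
      exact key t (Set.mem_Icc_of_Ioo ht)
  have h01 := mono (Set.left_mem_Icc.2 zero_le_one) (Set.right_mem_Icc.2 zero_le_one) zero_le_one
  have e0 : h 0 = -f x := by simp [hhdef, hgdef]
  have e1 : h 1 = L * ‖v‖ ^ 2 / 2 - f y + ⟪f' x, v⟫ := by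
    simp [hhdef, hgdef, hv]
  rw [e0, e1] at h01
  linarith
end gdAux

/-- Sublinear convergence of gradient descent with step `1/L` for a convex
`L`-smooth function: `f(x_k) − f(x*) ≤ L‖x₀ − x*‖²/(2k)` for all `k ≥ 1`. -/
theorem gd_convex_rate {n : ℕ} (f : EuclideanSpace ℝ (Fin n) → ℝ)
    (f' : EuclideanSpace ℝ (Fin n) → EuclideanSpace ℝ (Fin n))
    (hconv : ConvexOn ℝ Set.univ f)
    (hdiff : ∀ x, HasGradientAt f (f' x) x)
    (L : ℝ) (hL : 0 < L) (hlip : LipschitzWith (Real.toNNReal L) f')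
    (x : ℕ → EuclideanSpace ℝ (Fin n))
    (hiter : ∀ k, x (k+1) = x k - (1/L) • f' (x k))
    (xstar : EuclideanSpace ℝ (Fin n)) (hmin : ∀ y, f xstar ≤ f y) :
    ∀ k : ℕ, 1 ≤ k → f (x k) - f xstar ≤ L * ‖x 0 - xstar‖^2 / (2 * k) := by
  have step : ∀ k, f (x (k+1)) - f xstar ≤
      L/2 * (‖x k - xstar‖^2 - ‖x (k+1) - xstar‖^2) ∧ f (x (k+1)) ≤ f (x k) := by
    intro k
    set g := f' (x k) with hgd
    have hA := gd_descent hL hdiff hlip (x k) (x (k+1))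
    have hdiffxy : x (k+1) - x k = -((1/L) • g) := by rw [hiter k]; abel
    have hin : ⟪g, x (k+1) - x k⟫ = -((1/L) * ‖g‖^2) := by
      rw [hdiffxy, inner_neg_right, real_inner_smul_right, real_inner_self_eq_norm_sq]
    have hnn : ‖x (k+1) - x k‖^2 = (1/L)^2 * ‖g‖^2 := by
      rw [hdiffxy, norm_neg, norm_smul, mul_pow]
      congr 1
      rw [Real.norm_eq_abs, abs_of_nonneg (by positivity : (0:ℝ) ≤ 1/L)]
    rw [hin, hnn] at hA
    have hcoef : -((1/L) * ‖g‖^2) + L/2 * ((1/L)^2 * ‖g‖^2) = -(1/(2*L)) * ‖g‖^2 := by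
      field_simp
      ring
    have hA' : f (x (k+1)) ≤ f (x k) - 1/(2*L) * ‖g‖^2 := by linarith [hA, hcoef]
    have hB := gd_convex_lower hconv hdiff (x k) xstar
    have hBin : ⟪g, xstar - x k⟫ = -⟪g, x k - xstar⟫ := by
      rw [show xstar - x k = -(x k - xstar) by abel, inner_neg_right]
    rw [hBin] at hB
    have hC : ‖x (k+1) - xstar‖^2 =
        ‖x k - xstar‖^2 - 2 * ((1/L) * ⟪g, x k - xstar⟫) + (1/L)^2 * ‖g‖^2 := by
      have h1 : x (k+1) - xstar = (x k - xstar) - (1/L) • g := by rw [hiter k]; abel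
      rw [h1, norm_sub_sq_real, real_inner_smul_right, real_inner_comm, norm_smul, mul_pow]
      rw [Real.norm_eq_abs, abs_of_nonneg (by positivity : (0:ℝ) ≤ 1/L)]
    constructor
    · have hrhs : L/2 * (‖x k - xstar‖^2 - ‖x (k+1) - xstar‖^2) =
          ⟪g, x k - xstar⟫ - 1/(2*L) * ‖g‖^2 := by
        rw [hC]
        field_simp
        ring
      rw [hrhs]
      linarith
    · have hpos : 0 ≤ 1/(2*L) * ‖g‖^2 := by positivity
      linarith
  have mono : Antitone (fun k => f (x k)) := antitone_nat_of_succ_le (fun k => (step k).2)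
  intro k hk
  have hk0 : (0:ℝ) < (k:ℝ) := by exact_mod_cast Nat.pos_of_ne_zero (by omega)
  have hsum1 : (k:ℝ) * (f (x k) - f xstar) ≤
      ∑ i ∈ Finset.range k, (f (x (i+1)) - f xstar) := by
    have : ∑ i ∈ Finset.range k, (f (x k) - f xstar) = (k:ℝ) * (f (x k) - f xstar) := by
      rw [Finset.sum_const, Finset.card_range, nsmul_eq_mul]
    rw [← this]
    apply Finset.sum_le_sum
    intro i hi
    have : f (x k) ≤ f (x (i+1)) := mono (Finset.mem_range.1 hi)
    linarith
  have hsum2 : ∑ i ∈ Finset.range k, (f (x (i+1)) - f xstar) ≤ L/2 * ‖x 0 - xstar‖^2 := by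
    calc ∑ i ∈ Finset.range k, (f (x (i+1)) - f xstar)
        ≤ ∑ i ∈ Finset.range k, L/2 * (‖x i - xstar‖^2 - ‖x (i+1) - xstar‖^2) :=
          Finset.sum_le_sum (fun i _ => (step i).1)
      _ = L/2 * (‖x 0 - xstar‖^2 - ‖x k - xstar‖^2) := by
          rw [← Finset.mul_sum, Finset.sum_range_sub' (fun i => ‖x i - xstar‖^2)]
      _ ≤ L/2 * ‖x 0 - xstar‖^2 := by nlinarith [sq_nonneg ‖x k - xstar‖]
  rw [le_div_iff₀ (by positivity : (0:ℝ) < 2 * (k:ℝ))]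
  nlinarith [hsum1, hsum2]
end

section
/- Strong duality for ROF: if q* minimizes F(q) = (1/2)‖div q + b‖² + (1/2)‖b‖² over the constraint set C = {q : componentwise |q_i|₂ ≤ α}, then u* = b + div q* is the unique minimizer of the primal ROF problem u ↦ (1/2)‖u − b‖² + α·TV(u), where TV(u) = ‖Du‖_{2,1} and div = −D^T. -/
open scoped RealInnerProductSpace

set_option maxHeartbeats 1000000

/-- Strong duality for ROF: if `q*` minimizes the dual objective
`F(q) = (1/2)‖div q + b‖² + (1/2)‖b‖²` over `C = {q : ∀ i, |q i|₂ ≤ α}`, then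
`u* = b + div q*` is the unique minimizer of the primal ROF problem
`u ↦ (1/2)‖u − b‖² + α TV(u)` with `TV(u) = Σ_i |(Du)_i|₂` and `div = −Dᵀ`. -/
theorem rof_strong_duality {n : ℕ}
    (D : EuclideanSpace ℝ (Fin n) →L[ℝ] PiLp 2 (fun _ : Fin n => EuclideanSpace ℝ (Fin 2)))
    (dv : PiLp 2 (fun _ : Fin n => EuclideanSpace ℝ (Fin 2)) →L[ℝ] EuclideanSpace ℝ (Fin n))
    (hdiv : dv = -(ContinuousLinearMap.adjoint D))
    (b : EuclideanSpace ℝ (Fin n)) (α : ℝ) (hα : 0 < α)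
    (qs : PiLp 2 (fun _ : Fin n => EuclideanSpace ℝ (Fin 2)))
    (hqs_mem : ∀ i, ‖qs i‖ ≤ α)
    (hqs_min : ∀ q : PiLp 2 (fun _ : Fin n => EuclideanSpace ℝ (Fin 2)),
      (∀ i, ‖q i‖ ≤ α) →
      ((1:ℝ)/2) * ‖dv qs + b‖^2 + ((1:ℝ)/2) * ‖b‖^2 ≤
      ((1:ℝ)/2) * ‖dv q + b‖^2 + ((1:ℝ)/2) * ‖b‖^2) :
    let P : EuclideanSpace ℝ (Fin n) → ℝ :=
      fun u => ((1:ℝ)/2) * ‖u - b‖^2 + α * (∑ i, ‖(D u) i‖)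
    let us := b + dv qs
    (∀ u, P us ≤ P u) ∧ (∀ u, (∀ w, P u ≤ P w) → u = us) := by
  intro P us
  have hPdef : ∀ u, P u = ((1:ℝ)/2) * ‖u - b‖^2 + α * (∑ i, ‖(D u) i‖) := fun u => rfl
  have husdef : us = b + dv qs := rfl
  clear_value P us
  -- `dv` pairing identities
  have hdv_pair : ∀ (w : EuclideanSpace ℝ (Fin n))
      (d : PiLp 2 (fun _ : Fin n => EuclideanSpace ℝ (Fin 2))),
      ⟪w, dv d⟫ = -⟪D w, d⟫ := by
    intro w d
    rw [hdiv]
    simp only [ContinuousLinearMap.neg_apply, inner_neg_right]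
    rw [ContinuousLinearMap.adjoint_inner_right]
  -- Step 1: variational inequality ⟪D us, q⟫ ≤ ⟪D us, qs⟫ for q ∈ C
  have hvar : ∀ q : PiLp 2 (fun _ : Fin n => EuclideanSpace ℝ (Fin 2)),
      (∀ i, ‖q i‖ ≤ α) → ⟪D us, q - qs⟫ ≤ 0 := by
    intro q hq
    set d := q - qs with hd
    have key : ∀ t : ℝ, 0 < t → t ≤ 1 →
        0 ≤ 2 * t * ⟪dv qs + b, dv d⟫ + t^2 * ‖dv d‖^2 := by
      intro t ht ht1
      set qt := qs + t • d with hqt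
      have hqtC : ∀ i, ‖qt i‖ ≤ α := by
        intro i
        have h0 : qt i = qs i + t • (q i - qs i) := rfl
        have : qt i = (1 - t) • qs i + t • q i := by
          rw [h0, smul_sub, sub_smul, one_smul]; abel
        rw [this]
        calc ‖(1 - t) • qs i + t • q i‖ ≤ ‖(1 - t) • qs i‖ + ‖t • q i‖ := norm_add_le _ _
          _ = (1 - t) * ‖qs i‖ + t * ‖q i‖ := by
              rw [norm_smul, norm_smul, Real.norm_eq_abs, Real.norm_eq_abs,
                abs_of_nonneg (by linarith), abs_of_nonneg (by linarith)]
          _ ≤ (1 - t) * α + t * α := by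
              have := hqs_mem i; have := hq i
              have h1 : (0:ℝ) ≤ 1 - t := by linarith
              nlinarith
          _ = α := by ring
      have hmin := hqs_min qt hqtC
      have hexp : ‖dv qt + b‖^2 = ‖dv qs + b‖^2 + 2 * t * ⟪dv qs + b, dv d⟫
          + t^2 * ‖dv d‖^2 := by
        have : dv qt + b = (dv qs + b) + t • dv d := by
          simp only [hqt, map_add, map_smul]
          abel
        rw [this, norm_add_sq_real, real_inner_smul_right, norm_smul,
          Real.norm_eq_abs, abs_of_pos ht, mul_pow]
        ring
      rw [hexp] at hmin
      nlinarith
    have hnn : 0 ≤ ⟪dv qs + b, dv d⟫ := by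
      by_contra h
      push_neg at h
      set x := ⟪dv qs + b, dv d⟫ with hx
      set K := ‖dv d‖^2 with hK
      have hK0 : 0 ≤ K := sq_nonneg _
      set t : ℝ := min 1 (-x / (K + 1)) with htdef
      have hxpos : 0 < -x := by linarith
      have ht0 : 0 < t := lt_min one_pos (by positivity)
      have ht1 : t ≤ 1 := min_le_left _ _
      have h2 := key t ht0 ht1
      have htK : t * K ≤ -x * K / (K + 1) := by
        have : t ≤ -x / (K + 1) := min_le_right _ _
        calc t * K ≤ (-x / (K + 1)) * K := by nlinarith
          _ = -x * K / (K + 1) := by ring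
      have hlt : -x * K / (K + 1) < 2 * (-x) := by
        rw [div_lt_iff₀ (by linarith)]
        nlinarith
      nlinarith
    have : ⟪dv qs + b, dv d⟫ = -⟪D us, d⟫ := by
      have := hdv_pair (dv qs + b) d
      rw [husdef]
      rw [show b + dv qs = dv qs + b by abel]
      exact this
    rw [this] at hnn; linarith
  -- Step 2: α * TV(us) ≤ ⟪qs, D us⟫
  have hB : α * (∑ i, ‖(D us) i‖) ≤ ⟪qs, D us⟫ := by
    classical
    set q : PiLp 2 (fun _ : Fin n => EuclideanSpace ℝ (Fin 2)) :=
      WithLp.toLp 2 (fun i => if (D us) i = 0 then 0 else (α / ‖(D us) i‖) • (D us) i) with hqdef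
    have hqC : ∀ i, ‖q i‖ ≤ α := by
      intro i
      simp only [hqdef, PiLp.toLp_apply]
      split_ifs with h
      · simp [hα.le]
      · rw [norm_smul, Real.norm_eq_abs, abs_div, abs_of_pos hα, abs_of_nonneg (norm_nonneg _),
          div_mul_cancel₀]
        exact norm_ne_zero_iff.mpr h
    have hqpair : ⟪D us, q⟫ = α * (∑ i, ‖(D us) i‖) := by
      rw [PiLp.inner_apply, Finset.mul_sum]
      refine Finset.sum_congr rfl fun i _ => ?_
      simp only [hqdef, PiLp.toLp_apply]
      split_ifs with h
      · simp [h]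
      · have hne : ‖(D us) i‖ ≠ 0 := norm_ne_zero_iff.mpr h
        rw [real_inner_smul_right, real_inner_self_eq_norm_sq]
        field_simp
    have h1 := hvar q hqC
    rw [inner_sub_right] at h1
    have h2 : ⟪D us, qs⟫ = ⟪qs, D us⟫ := real_inner_comm _ _
    rw [hqpair, h2] at h1; linarith
  -- Step 3: Cauchy-Schwarz bound : ⟪qs, D u⟫ ≤ α * TV(u)
  have hC : ∀ u, ⟪qs, D u⟫ ≤ α * (∑ i, ‖(D u) i‖) := by
    intro u
    rw [PiLp.inner_apply, Finset.mul_sum]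
    refine Finset.sum_le_sum fun i _ => ?_
    calc ⟪qs i, (D u) i⟫ ≤ ‖qs i‖ * ‖(D u) i‖ := real_inner_le_norm _ _
      _ ≤ α * ‖(D u) i‖ := by
          have := hqs_mem i
          nlinarith [norm_nonneg ((D u) i)]
  -- Main inequality: P us + (1/2)‖u - us‖² ≤ P u
  have key : ∀ u, P us + ((1:ℝ)/2) * ‖u - us‖^2 ≤ P u := by
    intro u
    have hsq : ‖u - b‖^2 = ‖us - b‖^2 + 2 * ⟪us - b, u - us⟫ + ‖u - us‖^2 := by
      have : u - b = (us - b) + (u - us) := by abel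
      rw [this, norm_add_sq_real]
    have hub : us - b = dv qs := by rw [husdef]; abel
    have hip : ⟪us - b, u - us⟫ = -⟪qs, D u⟫ + ⟪qs, D us⟫ := by
      rw [hub]
      have h1 : ⟪dv qs, u - us⟫ = ⟪u - us, dv qs⟫ := real_inner_comm _ _
      rw [h1, hdv_pair, map_sub, inner_sub_left, real_inner_comm (D u) qs,
        real_inner_comm (D us) qs]
      ring
    have h2 := hC u
    rw [hPdef, hPdef, hsq, hip]
    nlinarith [sq_nonneg ‖u - us‖]
  have hhalf : ∀ u : EuclideanSpace ℝ (Fin n), (0:ℝ) ≤ ((1:ℝ)/2) * ‖u - us‖^2 := by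
    intro u; positivity
  constructor
  · intro u
    have h1 := key u
    have h2 := hhalf u
    linarith
  · intro u hu
    have h1 := hu us
    have h2 := key u
    have h3 : ((1:ℝ)/2) * ‖u - us‖^2 ≤ 0 := by linarith
    have h3' : ‖u - us‖^2 ≤ 0 := by linarith
    have h4 : ‖u - us‖^2 = 0 := le_antisymm h3' (sq_nonneg _)
    have h5 : u - us = 0 := by
      rwa [pow_eq_zero_iff (two_ne_zero), norm_eq_zero] at h4
    exact sub_eq_zero.mp h5
end
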